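/- Let N = 2n+1 and let T ∈ GL(N,ℂ) be a diagonal matrix whose multiset of eigenvalues equals {t₁ q^{1/2}, …, t_n q^{1/2}, 1, t₁^{−1} q^{−1/2}, …, t_n^{−1} q^{−1/2}} where q > 1 and |t_i| = 1 for all i. Suppose the same multiset also equals ⋃_i {u_i q^{s_i}, u_i^{−1} q^{−s_i}} ∪ ⋃_j {eigenvalues of v_j ⊗ diag(q^{(m_j−1)/2}, …, q^{(1−m_j)/2})}, where s_i ∈ (1/2)ℤ, the u_i, v_j-eigenvalues w satisfy q^{−1/2+δ} < |w| < q^{1/2−δ} for a fixed δ ∈ (0,1/2), and m_j ≥ 1 are integers with the total count of eigenvalues equal to N. Then: every m_j ≤ 2; exactly one j has m_j = 1, and for that j all eigenvalues of v_j have absolute value 1; every s_i ∈ {±1/2}; and all |u_i| = 1. -/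

import Mathlib

open Multiset in
private lemma countP_bind' {α β : Type*} (s : Multiset α) (f : α → Multiset β)
    (p : β → Prop) [DecidablePred p] :
    countP p (s.bind f) = (s.map fun a => countP p (f a)).sum := by
  induction s using Multiset.induction with
  | empty => simp
  | cons a s ih => simp [Multiset.countP_add, ih]

/-- comparison of Hecke eigenvalue multisets.  If the multiset
`{t_i q^{1/2}} ∪ {1} ∪ {t_i⁻¹ q^{-1/2}}` (with `|t_i| = 1`, `q > 1`) equals the multiset
`⋃_i {u_i q^{s_i}, u_i⁻¹ q^{-s_i}} ∪ ⋃_j {w · q^{(m_j-1)/2 - k} : w eigenvalue of v_j, k < m_j}`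
where `s_i ∈ ½ℤ` and all `|u_i|, |v_j|`-eigenvalues lie strictly between `q^{-1/2+δ}` and
`q^{1/2-δ}` (`0 < δ < 1/2`), then every `m_j ≤ 2`, exactly one `j` has `m_j = 1` and its
eigenvalues have absolute value `1`, every `s_i = ±1/2`, and all `|u_i| = 1`. -/
theorem stmt12 {ι κ : Type*} [Fintype ι] [Fintype κ]
    (n : ℕ) (q δ : ℝ) (hq : 1 < q) (hδ : δ ∈ Set.Ioo (0:ℝ) (1/2))
    (t : Fin n → ℂ) (ht : ∀ i, ‖t i‖ = 1)
    (u : ι → ℂ) (s : ι → ℝ) (hs : ∀ i, ∃ k : ℤ, s i = (k : ℝ)/2)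
    (hu : ∀ i, q ^ (-(1/2:ℝ) + δ) < ‖u i‖ ∧
               ‖u i‖ < q ^ ((1/2:ℝ) - δ))
    (d : κ → ℕ) (hd : ∀ j, 0 < d j)
    (m : κ → ℕ) (hm : ∀ j, 1 ≤ m j)
    (v : (j : κ) → Fin (d j) → ℂ)
    (hv : ∀ j a, q ^ (-(1/2:ℝ) + δ) < ‖v j a‖ ∧
                 ‖v j a‖ < q ^ ((1/2:ℝ) - δ))
    (heq :
      (Finset.univ.val.map fun i : Fin n => t i * ((q ^ ((1:ℝ)/2) : ℝ) : ℂ)) + {(1 : ℂ)} +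
        (Finset.univ.val.map fun i : Fin n => (t i)⁻¹ * ((q ^ (-(1:ℝ)/2) : ℝ) : ℂ))
      =
      (Finset.univ.val.bind fun i : ι =>
          {u i * ((q ^ (s i) : ℝ) : ℂ), (u i)⁻¹ * ((q ^ (-(s i)) : ℝ) : ℂ)}) +
      (Finset.univ.val.bind fun j : κ =>
          (Finset.univ.val : Multiset (Fin (d j))).bind fun a =>
            (Multiset.range (m j)).map fun k =>
              v j a * ((q ^ (((m j : ℝ) - 1)/2 - (k : ℝ)) : ℝ) : ℂ))) :
    (∀ j, m j ≤ 2) ∧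
    (∃! j, m j = 1) ∧
    (∀ j, m j = 1 → ∀ a, ‖v j a‖ = 1) ∧
    (∀ i, s i = 1/2 ∨ s i = -(1/2)) ∧
    (∀ i, ‖u i‖ = 1) := by
  classical
  obtain ⟨hδ0, hδ2⟩ := hδ
  have hq0 : (0:ℝ) < q := lt_trans one_pos hq
  have habs_mul : ∀ (z : ℂ) (e : ℝ),
      ‖z * ((q ^ e : ℝ) : ℂ)‖ = ‖z‖ * q ^ e := by
    intro z e
    rw [norm_mul, Complex.norm_real, Real.norm_eq_abs, abs_of_pos (Real.rpow_pos_of_pos hq0 e)]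
  have hdo : ∀ (M : ℕ) (x : ℝ), (x ∈ (do
      let a ← Multiset.range M
      pure ((a : ℝ)))) ↔ ∃ k : ℕ, k < M ∧ x = (k : ℝ) := by
    intro M x
    constructor
    · intro hx
      obtain ⟨k, hk, hek⟩ := Multiset.mem_bind.mp hx
      exact ⟨k, Multiset.mem_range.mp hk, by simpa using hek⟩
    · rintro ⟨k, hk, rfl⟩
      exact Multiset.mem_bind.mpr ⟨k, Multiset.mem_range.mpr hk, by simp⟩
  -- the key arithmetic lemma
  have key : ∀ x e : ℝ, q ^ (-(1/2:ℝ) + δ) < x → x < q ^ ((1/2:ℝ) - δ) →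
      (x * q ^ e = q ^ ((1:ℝ)/2) ∨ x * q ^ e = 1 ∨ x * q ^ e = q ^ (-(1:ℝ)/2)) →
      ∃ c : ℝ, (c = 1/2 ∨ c = 0 ∨ c = -(1/2)) ∧ x = q ^ (c - e) ∧
        -(1/2) + δ < c - e ∧ c - e < 1/2 - δ := by
    intro x e hx1 hx2 hS
    have hqe : (0:ℝ) < q ^ e := Real.rpow_pos_of_pos hq0 e
    have hc : ∃ c : ℝ, (c = 1/2 ∨ c = 0 ∨ c = -(1/2)) ∧ x * q ^ e = q ^ c := by
      rcases hS with h | h | h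
      · exact ⟨(1:ℝ)/2, Or.inl (by norm_num), h⟩
      · exact ⟨0, Or.inr (Or.inl rfl), by rw [Real.rpow_zero]; exact h⟩
      · exact ⟨-(1:ℝ)/2, Or.inr (Or.inr (by norm_num)), h⟩
    obtain ⟨c, hcm, hce⟩ := hc
    have hxe : x = q ^ (c - e) := by
      rw [Real.rpow_sub hq0, eq_div_iff hqe.ne']
      exact hce
    rw [hxe] at hx1 hx2
    exact ⟨c, hcm, hxe, (Real.rpow_lt_rpow_left_iff hq).mp hx1,
      (Real.rpow_lt_rpow_left_iff hq).mp hx2⟩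
  -- every element of the RHS has absolute value among q^{1/2}, 1, q^{-1/2}
  have hmem : ∀ x : ℂ, x ∈
      ((Finset.univ.val.bind fun i : ι =>
          ({u i * ((q ^ (s i) : ℝ) : ℂ), (u i)⁻¹ * ((q ^ (-(s i)) : ℝ) : ℂ)} : Multiset ℂ)) +
      (Finset.univ.val.bind fun j : κ =>
          (Finset.univ.val : Multiset (Fin (d j))).bind fun a =>
            (Multiset.range (m j)).map fun k =>
              v j a * ((q ^ (((m j : ℝ) - 1)/2 - (k : ℝ)) : ℝ) : ℂ))) →
      ‖x‖ = q ^ ((1:ℝ)/2) ∨ ‖x‖ = 1 ∨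
        ‖x‖ = q ^ (-(1:ℝ)/2) := by
    intro x hx
    rw [← heq] at hx
    rw [Multiset.mem_add, Multiset.mem_add] at hx
    rcases hx with (hx | hx) | hx
    · obtain ⟨i, -, rfl⟩ := Multiset.mem_map.mp hx
      left; rw [habs_mul, ht, one_mul]
    · right; left
      have : x = 1 := by simpa using hx
      rw [this, norm_one]
    · obtain ⟨i, -, rfl⟩ := Multiset.mem_map.mp hx
      right; right; rw [habs_mul, norm_inv, ht, inv_one, one_mul]
  -- analysis of the u_i
  have hU : ∀ i, ‖u i‖ = 1 ∧ (s i = 1/2 ∨ s i = 0 ∨ s i = -(1/2)) := by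
    intro i
    have hx : u i * ((q ^ (s i) : ℝ) : ℂ) ∈
        ((Finset.univ.val.bind fun i : ι =>
          ({u i * ((q ^ (s i) : ℝ) : ℂ), (u i)⁻¹ * ((q ^ (-(s i)) : ℝ) : ℂ)} : Multiset ℂ)) +
        (Finset.univ.val.bind fun j : κ =>
          (Finset.univ.val : Multiset (Fin (d j))).bind fun a =>
            (Multiset.range (m j)).map fun k =>
              v j a * ((q ^ (((m j : ℝ) - 1)/2 - (k : ℝ)) : ℝ) : ℂ))) :=
      Multiset.mem_add.mpr (Or.inl
        (Multiset.mem_bind.mpr ⟨i, Finset.mem_univ i, Multiset.mem_cons_self _ _⟩))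
    have hS := hmem _ hx
    rw [habs_mul] at hS
    obtain ⟨c, hcm, hxe, h1, h2⟩ := key _ _ (hu i).1 (hu i).2 hS
    obtain ⟨k, hk⟩ := hs i
    have hcs : c = s i := by
      obtain ⟨k', hk'⟩ : ∃ k' : ℤ, c = (k' : ℝ)/2 := by
        rcases hcm with h | h | h
        · exact ⟨1, by rw [h]; norm_num⟩
        · exact ⟨0, by rw [h]; norm_num⟩
        · exact ⟨-1, by rw [h]; push_cast; ring⟩
      rw [hk', hk] at h1 h2 ⊢
      have l1 : ((-1 : ℤ) : ℝ) < ((k' - k : ℤ) : ℝ) := by push_cast; linarith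
      have l2 : ((k' - k : ℤ) : ℝ) < ((1 : ℤ) : ℝ) := by push_cast; linarith
      have e1 : (-1 : ℤ) < k' - k := by exact_mod_cast l1
      have e2 : (k' - k : ℤ) < 1 := by exact_mod_cast l2
      have : k' = k := by omega
      rw [this]
    refine ⟨?_, hcs ▸ hcm⟩
    rw [hxe, hcs, sub_self, Real.rpow_zero]
  -- analysis of the v_j eigenvalues
  have hV : ∀ j a (k : ℕ), k < m j →
      ∃ c : ℝ, (c = 1/2 ∨ c = 0 ∨ c = -(1/2)) ∧
        ‖v j a‖ = q ^ (c - (((m j : ℝ) - 1)/2 - (k : ℝ))) ∧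
        -(1/2) + δ < c - (((m j : ℝ) - 1)/2 - (k : ℝ)) ∧
        c - (((m j : ℝ) - 1)/2 - (k : ℝ)) < 1/2 - δ := by
    intro j a k hk
    have hx : v j a * ((q ^ (((m j : ℝ) - 1)/2 - (k : ℝ)) : ℝ) : ℂ) ∈
        ((Finset.univ.val.bind fun i : ι =>
          ({u i * ((q ^ (s i) : ℝ) : ℂ), (u i)⁻¹ * ((q ^ (-(s i)) : ℝ) : ℂ)} : Multiset ℂ)) +
        (Finset.univ.val.bind fun j : κ =>
          (Finset.univ.val : Multiset (Fin (d j))).bind fun a =>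
            (Multiset.range (m j)).map fun k =>
              v j a * ((q ^ (((m j : ℝ) - 1)/2 - (k : ℝ)) : ℝ) : ℂ))) :=
      Multiset.mem_add.mpr (Or.inr (Multiset.mem_bind.mpr ⟨j, Finset.mem_univ j,
        Multiset.mem_bind.mpr ⟨a, Finset.mem_univ a,
          Multiset.mem_map.mpr ⟨(k : ℝ), (hdo (m j) _).mpr ⟨k, hk, rfl⟩, rfl⟩⟩⟩))
    have hS := hmem _ hx
    rw [habs_mul] at hS
    exact key _ _ (hv j a).1 (hv j a).2 hS
  -- every m_j ≤ 2
  have hm2 : ∀ j, m j ≤ 2 := by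
    intro j
    by_contra h
    push_neg at h
    obtain ⟨c, hcm, -, h1, -⟩ := hV j ⟨0, hd j⟩ 0 (by omega)
    have hm3 : (3:ℝ) ≤ (m j : ℝ) := by exact_mod_cast h
    have hc : c ≤ 1/2 := by rcases hcm with h | h | h <;> rw [h] <;> norm_num
    push_cast at h1
    linarith
  -- all eigenvalues of the v_j have absolute value 1
  have hv_abs : ∀ j a, ‖v j a‖ = 1 := by
    intro j a
    obtain ⟨c, hcm, heqa, hb1, hb2⟩ := hV j a 0 (by have := hm j; omega)
    rcases (by have := hm j; have := hm2 j; omega : m j = 1 ∨ m j = 2) with hmj | hmj <;>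
      rw [hmj] at heqa hb1 hb2 <;> push_cast at heqa hb1 hb2
    · have hc0 : c = 0 := by
        rcases hcm with h | h | h
        · exfalso; rw [h] at hb2; linarith
        · exact h
        · exfalso; rw [h] at hb1; linarith
      rw [heqa, hc0]
      norm_num
    · have hc0 : c = 1/2 := by
        rcases hcm with h | h | h
        · exact h
        · exfalso; rw [h] at hb1; linarith
        · exfalso; rw [h] at hb1; linarith
      rw [heqa, hc0]
      norm_num
  -- counting elements of absolute value 1
  set P : ℂ → Prop := fun x => ‖x‖ = 1 with hP
  have hq_half : (1:ℝ) < q ^ ((1:ℝ)/2) := by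
    have := (Real.rpow_lt_rpow_left_iff hq).mpr (by norm_num : (0:ℝ) < 1/2)
    rwa [Real.rpow_zero] at this
  have hq_nhalf : q ^ (-(1:ℝ)/2) < 1 := by
    have := (Real.rpow_lt_rpow_left_iff hq).mpr (by norm_num : (-1:ℝ)/2 < 0)
    rwa [Real.rpow_zero] at this
  have hne : ∀ e : ℝ, e ≠ 0 → q ^ e ≠ 1 := by
    intro e he
    rcases lt_or_gt_of_ne he with h | h
    · exact ne_of_lt (Real.rpow_lt_one_of_one_lt_of_neg hq h)
    · refine ne_of_gt ?_
      have := (Real.rpow_lt_rpow_left_iff hq).mpr h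
      rwa [Real.rpow_zero] at this
  -- count on the left side is 1
  have hcL : Multiset.countP P
      ((Finset.univ.val.map fun i : Fin n => t i * ((q ^ ((1:ℝ)/2) : ℝ) : ℂ)) + {(1 : ℂ)} +
        (Finset.univ.val.map fun i : Fin n => (t i)⁻¹ * ((q ^ (-(1:ℝ)/2) : ℝ) : ℂ))) = 1 := by
    rw [Multiset.countP_add, Multiset.countP_add]
    have hA : Multiset.countP P
        (Finset.univ.val.map fun i : Fin n => t i * ((q ^ ((1:ℝ)/2) : ℝ) : ℂ)) = 0 := by
      rw [Multiset.countP_eq_zero]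
      intro x hx
      obtain ⟨i, -, rfl⟩ := Multiset.mem_map.mp hx
      simp only [hP]
      rw [habs_mul, ht, one_mul]
      exact ne_of_gt hq_half
    have hC : Multiset.countP P
        (Finset.univ.val.map fun i : Fin n => (t i)⁻¹ * ((q ^ (-(1:ℝ)/2) : ℝ) : ℂ)) = 0 := by
      rw [Multiset.countP_eq_zero]
      intro x hx
      obtain ⟨i, -, rfl⟩ := Multiset.mem_map.mp hx
      simp only [hP]
      rw [habs_mul, norm_inv, ht, inv_one, one_mul]
      exact ne_of_lt hq_nhalf
    have hB : Multiset.countP P ({(1:ℂ)} : Multiset ℂ) = 1 := by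
      rw [show ({(1:ℂ)} : Multiset ℂ) = (1:ℂ) ::ₘ 0 from rfl, Multiset.countP_cons]
      simp [hP]
    rw [hA, hB, hC]
  have hcR : Multiset.countP P
      (Finset.univ.val.bind fun i : ι =>
          ({u i * ((q ^ (s i) : ℝ) : ℂ), (u i)⁻¹ * ((q ^ (-(s i)) : ℝ) : ℂ)} : Multiset ℂ)) +
      Multiset.countP P
      (Finset.univ.val.bind fun j : κ =>
          (Finset.univ.val : Multiset (Fin (d j))).bind fun a =>
            (Multiset.range (m j)).map fun k =>
              v j a * ((q ^ (((m j : ℝ) - 1)/2 - (k : ℝ)) : ℝ) : ℂ)) = 1 := by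
    rw [← Multiset.countP_add, ← heq]
    exact hcL
  -- no s_i is 0
  have hs_ne : ∀ i, s i ≠ 0 := by
    intro i0 hsz
    have hpair : Multiset.countP P
        ({u i0 * ((q ^ (s i0) : ℝ) : ℂ), (u i0)⁻¹ * ((q ^ (-(s i0)) : ℝ) : ℂ)} : Multiset ℂ)
        = 2 := by
      rw [show ({u i0 * ((q ^ (s i0) : ℝ) : ℂ), (u i0)⁻¹ * ((q ^ (-(s i0)) : ℝ) : ℂ)} :
            Multiset ℂ) = (u i0 * ((q ^ (s i0) : ℝ) : ℂ)) ::ₘ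
            ((u i0)⁻¹ * ((q ^ (-(s i0)) : ℝ) : ℂ)) ::ₘ 0 from rfl,
        Multiset.countP_cons, Multiset.countP_cons]
      have h1 : P (u i0 * ((q ^ (s i0) : ℝ) : ℂ)) := by
        simp only [hP]
        rw [habs_mul, (hU i0).1, one_mul, hsz, Real.rpow_zero]
      have h2 : P ((u i0)⁻¹ * ((q ^ (-(s i0)) : ℝ) : ℂ)) := by
        simp only [hP]
        rw [habs_mul, norm_inv, (hU i0).1, inv_one, one_mul, hsz, neg_zero, Real.rpow_zero]
      rw [if_pos h1, if_pos h2, Multiset.countP_zero]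
    have hle : Multiset.countP P
        ({u i0 * ((q ^ (s i0) : ℝ) : ℂ), (u i0)⁻¹ * ((q ^ (-(s i0)) : ℝ) : ℂ)} : Multiset ℂ) ≤
        Multiset.countP P
        (Finset.univ.val.bind fun i : ι =>
          ({u i * ((q ^ (s i) : ℝ) : ℂ), (u i)⁻¹ * ((q ^ (-(s i)) : ℝ) : ℂ)} : Multiset ℂ)) :=
      Multiset.countP_le_of_le _ (Multiset.le_bind _ (Finset.mem_univ i0))
    omega
  have hs_val : ∀ i, s i = 1/2 ∨ s i = -(1/2) := by
    intro i
    rcases (hU i).2 with h | h | h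
    · exact Or.inl h
    · exact absurd h (hs_ne i)
    · exact Or.inr h
  -- count on the R1 part is 0
  have hcR1 : Multiset.countP P
      (Finset.univ.val.bind fun i : ι =>
          ({u i * ((q ^ (s i) : ℝ) : ℂ), (u i)⁻¹ * ((q ^ (-(s i)) : ℝ) : ℂ)} : Multiset ℂ)) = 0 := by
    rw [Multiset.countP_eq_zero]
    intro x hx
    obtain ⟨i, -, hxm⟩ := Multiset.mem_bind.mp hx
    simp only [Multiset.insert_eq_cons, Multiset.mem_cons, Multiset.mem_singleton] at hxm
    have habs1 : ‖u i‖ = 1 := (hU i).1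
    rcases hxm with rfl | rfl
    · simp only [hP]
      rw [habs_mul, habs1, one_mul]
      exact hne _ (hs_ne i)
    · simp only [hP]
      rw [habs_mul, norm_inv, habs1, inv_one, one_mul]
      exact hne _ (neg_ne_zero.mpr (hs_ne i))
  -- count on each j block
  have hgen : ∀ j, (m j = 1 →
      Multiset.countP P ((Finset.univ.val : Multiset (Fin (d j))).bind fun a =>
        (Multiset.range (m j)).map fun k =>
          v j a * ((q ^ (((m j : ℝ) - 1)/2 - (k : ℝ)) : ℝ) : ℂ)) = d j) ∧
      (m j = 2 →
      Multiset.countP P ((Finset.univ.val : Multiset (Fin (d j))).bind fun a =>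
        (Multiset.range (m j)).map fun k =>
          v j a * ((q ^ (((m j : ℝ) - 1)/2 - (k : ℝ)) : ℝ) : ℂ)) = 0) := by
    intro j
    constructor
    · intro hmj
      have hall : ∀ x ∈ ((Finset.univ.val : Multiset (Fin (d j))).bind fun a =>
          (Multiset.range (m j)).map fun k =>
            v j a * ((q ^ (((m j : ℝ) - 1)/2 - (k : ℝ)) : ℝ) : ℂ)), P x := by
        intro x hx
        obtain ⟨a, -, hxm⟩ := Multiset.mem_bind.mp hx
        obtain ⟨kr, hkr, rfl⟩ := Multiset.mem_map.mp hxm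
        obtain ⟨k, hk, rfl⟩ := (hdo (m j) kr).mp hkr
        rw [hmj] at hk
        interval_cases k
        simp only [hP]
        rw [habs_mul, hv_abs, one_mul, hmj]
        norm_num
      rw [Multiset.countP_eq_card.mpr hall]
      simp [hmj, Multiset.card_bind]
    · intro hmj
      rw [Multiset.countP_eq_zero]
      intro x hx
      obtain ⟨a, -, hxm⟩ := Multiset.mem_bind.mp hx
      obtain ⟨kr, hkr, rfl⟩ := Multiset.mem_map.mp hxm
      obtain ⟨k, hk, rfl⟩ := (hdo (m j) kr).mp hkr
      rw [hmj] at hk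
      simp only [hP]
      rw [habs_mul, hv_abs, one_mul]
      refine hne _ ?_
      interval_cases k <;> rw [hmj] <;> push_cast <;> norm_num
  -- total count over j blocks equals 1
  have hsum : ∑ j : κ, Multiset.countP P
      ((Finset.univ.val : Multiset (Fin (d j))).bind fun a =>
        (Multiset.range (m j)).map fun k =>
          v j a * ((q ^ (((m j : ℝ) - 1)/2 - (k : ℝ)) : ℝ) : ℂ)) = 1 := by
    have := hcR
    rw [hcR1, zero_add, countP_bind'] at this
    exact this
  set g : κ → ℕ := fun j => Multiset.countP P
      ((Finset.univ.val : Multiset (Fin (d j))).bind fun a =>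
        (Multiset.range (m j)).map fun k =>
          v j a * ((q ^ (((m j : ℝ) - 1)/2 - (k : ℝ)) : ℝ) : ℂ)) with hg_def
  have hg1 : ∀ j, m j = 1 → g j = d j := fun j => (hgen j).1
  have hg2 : ∀ j, m j = 2 → g j = 0 := fun j => (hgen j).2
  have hex : ∃ j, m j = 1 := by
    by_contra hno
    push_neg at hno
    have : ∀ j ∈ Finset.univ, g j = 0 := by
      intro j _
      exact hg2 j (by have := hm j; have := hm2 j; have := hno j; omega)
    rw [Finset.sum_eq_zero this] at hsum
    exact absurd hsum (by norm_num)
  obtain ⟨j0, hj0⟩ := hex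
  have huniq : ∀ j', m j' = 1 → j' = j0 := by
    intro j' hj'
    by_contra hne'
    have hsub : ({j', j0} : Finset κ) ⊆ Finset.univ := Finset.subset_univ _
    have h2 : g j' + g j0 ≤ ∑ j : κ, g j := by
      have := Finset.sum_le_sum_of_subset hsub (f := g)
      rwa [Finset.sum_pair hne'] at this
    have := hg1 j0 hj0
    have := hg1 j' hj'
    have := hd j0
    have := hd j'
    have hsum' : ∑ j : κ, g j = 1 := hsum
    omega
  refine ⟨hm2, ⟨j0, hj0, huniq⟩, fun j _ a => hv_abs j a, hs_val, fun i => (hU i).1⟩
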